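/- Let R be a commutative ring, n ≥ 0, and let h, g ∈ R[θ,t] be bivariate polynomials such that (t − θ)^{n+1} divides h − g. Then for every 0 ≤ j ≤ n: ( ∂_θ^{(j)}(h) )(θ,θ) = ( ∂_θ^{(j)}(g) )(θ,θ), i.e. the j-th Hasse derivatives with respect to θ agree after substituting t = θ. -/
import Mathlib


open Polynomial

/-- The Hasse derivative with respect to the "inner" variable `θ` on the bivariate
polynomial ring `R[θ][t]` (outer variable `t`, coefficients in `R[θ]`): it acts on each
coefficient by the `j`-th Hasse derivative, i.e. it is the `R[t]`-linear map sending
`θ^i` to `binom(i,j)·θ^{i-j}`. -/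
noncomputable def hasseDerivTheta {R : Type*} [CommRing R] (j : ℕ)
    (f : Polynomial (Polynomial R)) : Polynomial (Polynomial R) :=
  f.sum fun i a => Polynomial.C (Polynomial.hasseDeriv j a) * Polynomial.X ^ i

private lemma hasseDeriv_X_mul' {R : Type*} [CommRing R] (j : ℕ) (a : Polynomial R) :
    hasseDeriv (j+1) (X * a) = X * hasseDeriv (j+1) a + hasseDeriv j a := by
  rw [hasseDeriv_mul, Finset.Nat.sum_antidiagonal_eq_sum_range_succ_mk]
  rw [← Finset.sum_subset (h := show ({0,1} : Finset ℕ) ⊆ Finset.range (j+2) by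
        intro x hx; fin_cases hx <;> simp)]
  · simp [Finset.sum_pair, Nat.add_sub_cancel]
  · intro x hx hx2
    have h2 : 1 < x := by simp at hx2; omega
    rw [hasseDeriv_X _ h2, zero_mul]

private lemma hasseDerivTheta_monomial' {R : Type*} [CommRing R] (j i : ℕ) (a : Polynomial R) :
    hasseDerivTheta j (Polynomial.monomial i a) = Polynomial.monomial i (hasseDeriv j a) := by
  rw [hasseDerivTheta, Polynomial.sum_monomial_index, ← Polynomial.C_mul_X_pow_eq_monomial]
  simp

private lemma hasseDerivTheta_add' {R : Type*} [CommRing R] (j : ℕ)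
    (f g : Polynomial (Polynomial R)) :
    hasseDerivTheta j (f + g) = hasseDerivTheta j f + hasseDerivTheta j g := by
  unfold hasseDerivTheta
  apply Polynomial.sum_add_index <;> intros <;> simp [add_mul]

private lemma hasseDerivTheta_zero_poly {R : Type*} [CommRing R] (j : ℕ) :
    hasseDerivTheta j (0 : Polynomial (Polynomial R)) = 0 := by
  simp [hasseDerivTheta]

private lemma hasseDerivTheta_neg' {R : Type*} [CommRing R] (j : ℕ)
    (f : Polynomial (Polynomial R)) :
    hasseDerivTheta j (-f) = - hasseDerivTheta j f := by
  have := hasseDerivTheta_add' j f (-f)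
  rw [add_neg_cancel, hasseDerivTheta_zero_poly] at this
  exact (neg_eq_of_add_eq_zero_right this.symm).symm

private lemma hasseDerivTheta_zeroth {R : Type*} [CommRing R]
    (f : Polynomial (Polynomial R)) : hasseDerivTheta 0 f = f := by
  unfold hasseDerivTheta
  simp only [hasseDeriv_zero, LinearMap.id_coe, id_eq]
  exact Polynomial.sum_C_mul_X_pow_eq f

/-- the key step: `Φ_{j+1}((t-θ)·f) = -Φ_j f`. -/
private lemma step' {R : Type*} [CommRing R] (j : ℕ) (f : Polynomial (Polynomial R)) :
    (hasseDerivTheta (j+1) ((Polynomial.X - Polynomial.C Polynomial.X) * f)).eval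
        (Polynomial.X : Polynomial R)
      = - (hasseDerivTheta j f).eval (Polynomial.X : Polynomial R) := by
  induction f using Polynomial.induction_on' with
  | add p q hp hq =>
    rw [mul_add, hasseDerivTheta_add', hasseDerivTheta_add', Polynomial.eval_add,
      Polynomial.eval_add, hp, hq, neg_add]
  | monomial i a =>
    have key : (Polynomial.X - Polynomial.C Polynomial.X) * Polynomial.monomial i a
        = Polynomial.monomial (i+1) a + (- Polynomial.monomial i (Polynomial.X * a)) := by
      rw [sub_mul, Polynomial.X_mul_monomial]
      simp [Polynomial.C_mul_monomial, sub_eq_add_neg]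
    rw [key, hasseDerivTheta_add', hasseDerivTheta_neg', hasseDerivTheta_monomial',
      hasseDerivTheta_monomial', hasseDerivTheta_monomial', hasseDeriv_X_mul']
    simp only [Polynomial.eval_add, Polynomial.eval_neg, Polynomial.eval_monomial]
    ring

private lemma key_vanish {R : Type*} [CommRing R] :
    ∀ (j m : ℕ) (f : Polynomial (Polynomial R)), j < m →
    (hasseDerivTheta j ((Polynomial.X - Polynomial.C Polynomial.X) ^ m * f)).eval
        (Polynomial.X : Polynomial R) = 0 := by
  intro j
  induction j with
  | zero =>
    intro m f hm
    rw [hasseDerivTheta_zeroth]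
    obtain ⟨m, rfl⟩ := Nat.exists_eq_succ_of_ne_zero (by omega : m ≠ 0)
    simp [pow_succ, Polynomial.eval_mul]
  | succ j ih =>
    intro m f hm
    obtain ⟨m, rfl⟩ := Nat.exists_eq_succ_of_ne_zero (by omega : m ≠ 0)
    have : (Polynomial.X - Polynomial.C Polynomial.X) ^ (m + 1) * f
        = (Polynomial.X - Polynomial.C Polynomial.X)
          * ((Polynomial.X - Polynomial.C Polynomial.X) ^ m * f) := by ring
    rw [this, step', ih m f (by omega), neg_zero]

/-- Let `R` be a commutative ring, `n ≥ 0`, and let `h, g ∈ R[θ,t]`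
(modelled as `R[θ][t]`, outer variable `t`) be such that `(t − θ)^{n+1}` divides `h − g`.
Then for every `0 ≤ j ≤ n`, the `j`-th Hasse derivatives with respect to `θ` agree after
substituting `t = θ`: `(∂_θ^{(j)}(h))(θ,θ) = (∂_θ^{(j)}(g))(θ,θ)`. -/
theorem hasseDerivTheta_eval_diag_eq_of_dvd {R : Type*} [CommRing R] (n : ℕ)
    (h g : Polynomial (Polynomial R))
    (hdvd : ((Polynomial.X : Polynomial (Polynomial R)) -
        Polynomial.C (Polynomial.X : Polynomial R)) ^ (n + 1) ∣ h - g)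
    (j : ℕ) (hj : j ≤ n) :
    (hasseDerivTheta j h).eval (Polynomial.X : Polynomial R)
      = (hasseDerivTheta j g).eval (Polynomial.X : Polynomial R) := by
  obtain ⟨q, hq⟩ := hdvd
  have hsum : h = g + (Polynomial.X - Polynomial.C Polynomial.X) ^ (n + 1) * q := by
    rw [← hq]; ring
  rw [hsum, hasseDerivTheta_add', Polynomial.eval_add,
    key_vanish j (n + 1) q (by omega), add_zero]
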